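/- arXiv:1912.08322 — 3 statements merged into one kernel-verified Lean document; each statement's English description precedes it below -/
import Mathlib

section
/- Let Δ > 1 be a real number, let e₁, …, e_i (i ≥ 2) be positive reals satisfying the Δ size invariant, and let e* be a real number with e_{i−1} < e* ≤ e_i. Then ∑_{j=1}^{i} e_j^{3/2} < (1 + Δ^{3/2} + 1/(Δ^{3/2} − 1)) · (e*)^{3/2}. -/
/-!
The invariant makes `e j ^ (3/2)` a geometric sequence with ratio `D = Δ ^ (3/2) > 1`, so the
sum is `(D ^ i - 1) / (D - 1)` times its first term, which is less than `D ^ 2 / (D - 1)` times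
the term `e (i - 1) ^ (3/2) < e* ^ (3/2)`; and `D ^ 2 / (D - 1) = 1 + D + 1 / (D - 1)`.
-/

open Finset

theorem geom_sum_lt_mul_pow {r : ℝ} (hr : 1 < r) (n : ℕ) :
    ∑ k ∈ range (n + 2), r ^ k < (1 + r + 1 / (r - 1)) * r ^ n := by
  have hr1 : 0 < r - 1 := sub_pos.2 hr
  rw [geom_sum_eq hr.ne', div_lt_iff₀ hr1]
  have : (1 + r + 1 / (r - 1)) * r ^ n * (r - 1) = r ^ (n + 2) := by
    field_simp
    ring
  linarith

theorem eq_pow_mul_of_succ_eq_mul {M : Type*} [Monoid M] {a : M} {e : ℕ → M} {i : ℕ}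
    (h : ∀ j, 1 ≤ j → j < i → e (j + 1) = a * e j) :
    ∀ k < i, e (k + 1) = a ^ k * e 1 := by
  intro k hk
  induction k with
  | zero => simp
  | succ k ih => rw [h (k + 1) (by omega) hk, ih (by omega), pow_succ', mul_assoc]

theorem sum_Icc_one_eq_sum_range {M : Type*} [AddCommMonoid M] (f : ℕ → M) (n : ℕ) :
    ∑ j ∈ Icc 1 n, f j = ∑ k ∈ range n, f (k + 1) := by
  rw [← Ico_add_one_right_eq_Icc, sum_Ico_eq_sum_range, add_tsub_cancel_right]
  simp only [add_comm]

theorem Real.pow_mul_rpow {x y : ℝ} (hx : 0 ≤ x) (hy : 0 ≤ y) (k : ℕ) (p : ℝ) :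
    (x ^ k * y) ^ p = (x ^ p) ^ k * y ^ p := by
  rw [Real.mul_rpow (pow_nonneg hx k) hy, Real.rpow_pow_comm hx]

theorem delta_invariant_sum_rpow_general (Δ : ℝ) (hΔ : 1 < Δ) (i : ℕ) (hi : 2 ≤ i)
    (e : ℕ → ℝ)
    (hpos : ∀ j, 1 ≤ j → j ≤ i → 0 < e j)
    (hinv : ∀ j, 1 ≤ j → j < i → e (j + 1) = Δ * e j)
    (estar : ℝ) (hlt : e (i - 1) < estar) :
    ∑ j ∈ Finset.Icc 1 i, e j ^ ((3 : ℝ) / 2) <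
      (1 + Δ ^ ((3 : ℝ) / 2) + 1 / (Δ ^ ((3 : ℝ) / 2) - 1)) * estar ^ ((3 : ℝ) / 2) := by
  obtain ⟨n, rfl⟩ := Nat.exists_eq_add_of_le' hi
  set p : ℝ := 3 / 2
  set D := Δ ^ p
  have hΔ0 : 0 ≤ Δ := by linarith
  have he1 : 0 < e 1 := hpos 1 le_rfl (by omega)
  have hD : 1 < D := Real.one_lt_rpow hΔ (by norm_num)
  have hgeom := eq_pow_mul_of_succ_eq_mul hinv
  have hterm : ∀ k < n + 2, e (k + 1) ^ p = D ^ k * e 1 ^ p := fun k hk ↦ by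
    rw [hgeom k hk, Real.pow_mul_rpow hΔ0 he1.le]
  calc ∑ j ∈ Icc 1 (n + 2), e j ^ p
      = (∑ k ∈ range (n + 2), D ^ k) * e 1 ^ p := by
        rw [sum_Icc_one_eq_sum_range, sum_mul]
        exact sum_congr rfl fun k hk ↦ hterm k (mem_range.1 hk)
    _ < (1 + D + 1 / (D - 1)) * (D ^ n * e 1 ^ p) := by
        rw [← mul_assoc]
        exact mul_lt_mul_of_pos_right (geom_sum_lt_mul_pow hD n)
          (Real.rpow_pos_of_pos he1 p)
    _ = (1 + D + 1 / (D - 1)) * e (n + 1) ^ p := by rw [hterm n (by omega)]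
    _ < (1 + D + 1 / (D - 1)) * estar ^ p := by
        have hfac : 0 < 1 + D + 1 / (D - 1) := by
          have : 0 < D - 1 := sub_pos.2 hD
          positivity
        refine mul_lt_mul_of_pos_left (Real.rpow_lt_rpow ?_ hlt (by norm_num)) hfac
        exact (hpos (n + 1) (by omega) (by omega)).le

/-- **Lemma 5 (paper), combinatorial core.** If `Δ > 1`, positive reals
`e 1, …, e i` (with `i ≥ 2`) satisfy the `Δ` size invariant, and
`e (i-1) < e* ≤ e i`, then
`∑_{j=1}^{i} (e j)^{3/2} < (1 + Δ^{3/2} + 1/(Δ^{3/2} - 1)) * (e*)^{3/2}`. -/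
theorem delta_invariant_sum_rpow (Δ : ℝ) (hΔ : 1 < Δ) (i : ℕ) (hi : 2 ≤ i)
    (e : ℕ → ℝ)
    (hpos : ∀ j, 1 ≤ j → j ≤ i → 0 < e j)
    (hinv : ∀ j, 1 ≤ j → j < i → e (j + 1) = Δ * e j)
    (estar : ℝ) (hlt : e (i - 1) < estar) (hle : estar ≤ e i) :
    ∑ j ∈ Finset.Icc 1 i, e j ^ ((3 : ℝ) / 2) <
      (1 + Δ ^ ((3 : ℝ) / 2) + 1 / (Δ ^ ((3 : ℝ) / 2) - 1)) * estar ^ ((3 : ℝ) / 2) :=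
  delta_invariant_sum_rpow_general Δ hΔ i hi e hpos hinv estar hlt
end

section
/- Let c ≥ 2 be an integer and let S be a finite connected simple graph with at least two vertices satisfying the c-truss support condition. Then for every set F of edges of S with |F| ≤ c − 2, the graph obtained from S by deleting the edges in F is still connected. In other words, at least c − 1 edges must be deleted to disconnect S. -/
/-- If `c ≥ 2` and a finite connected simple graph `S` with at least two
vertices satisfies the `c`-truss support condition, then deleting any set `F`
of at most `c - 2` edges of `S` leaves the graph connected: at least `c - 1`
edges must be deleted to disconnect `S`. -/
theorem truss_edge_connectivity {V : Type*} [Fintype V] [DecidableEq V]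
    (c : ℕ) (hc : 2 ≤ c)
    (S : SimpleGraph V) [DecidableRel S.Adj]
    (hconn : S.Connected) (hcard : 2 ≤ Fintype.card V)
    (htruss : ∀ u v : V, S.Adj u v →
      c - 2 ≤ (S.neighborFinset u ∩ S.neighborFinset v).card)
    (F : Finset (Sym2 V)) (hF : ↑F ⊆ S.edgeSet) (hFcard : F.card ≤ c - 2) :
    (S.deleteEdges ↑F).Connected := by
  classical
  have key : ∀ u v : V, S.Adj u v → (S.deleteEdges ↑F).Reachable u v := by
    intro u v huv
    by_cases hin : s(u,v) ∈ F
    · have hF1 : 1 ≤ F.card := Finset.card_pos.mpr ⟨_, hin⟩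
      set T := S.neighborFinset u ∩ S.neighborFinset v with hT
      have hTcard : c - 2 ≤ T.card := htruss u v huv
      set B := T.filter (fun w => s(u,w) ∈ F ∨ s(w,v) ∈ F) with hB
      have hBle : B.card ≤ (F.erase s(u,v)).card := by
        apply Finset.card_le_card_of_injOn
          (fun w => if s(u,w) ∈ F then s(u,w) else s(w,v))
        · intro w hw
          simp only [hB, Finset.mem_coe, Finset.mem_filter, hT, Finset.mem_inter,
            SimpleGraph.mem_neighborFinset] at hw
          obtain ⟨⟨hwu, hwv⟩, hcase⟩ := hw
          have hwnv : w ≠ v := fun h => S.irrefl (h ▸ hwv)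
          have hwnu : w ≠ u := fun h => S.irrefl (h ▸ hwu)
          have hune : u ≠ v := huv.ne
          by_cases h1 : s(u,w) ∈ F
          · simp only [if_pos h1]
            refine Finset.mem_erase.mpr ⟨?_, h1⟩
            simp only [ne_eq, Sym2.eq_iff]
            tauto
          · simp only [if_neg h1]
            have h2 : s(w,v) ∈ F := by tauto
            refine Finset.mem_erase.mpr ⟨?_, h2⟩
            simp only [ne_eq, Sym2.eq_iff]
            tauto
        · intro a ha b hb hab
          simp only [hB, Finset.mem_coe, Finset.mem_filter, hT, Finset.mem_inter,
            SimpleGraph.mem_neighborFinset] at ha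
          simp only [hB, Finset.mem_coe, Finset.mem_filter, hT, Finset.mem_inter,
            SimpleGraph.mem_neighborFinset] at hb
          obtain ⟨⟨hau, hav⟩, -⟩ := ha
          obtain ⟨⟨hbu, hbv⟩, -⟩ := hb
          have hanv : a ≠ v := fun h => S.irrefl (h ▸ hav)
          have hanu : a ≠ u := fun h => S.irrefl (h ▸ hau)
          have hbnv : b ≠ v := fun h => S.irrefl (h ▸ hbv)
          have hbnu : b ≠ u := fun h => S.irrefl (h ▸ hbu)
          by_cases h1 : s(u,a) ∈ F <;> by_cases h2 : s(u,b) ∈ F <;>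
            simp only [h1, h2, if_true, if_false, Sym2.eq_iff] at hab <;>
            tauto
      have hBlt : B.card < T.card := by
        have := Finset.card_erase_of_mem hin
        omega
      have hsub : ¬ T ⊆ B := fun h => absurd (Finset.card_le_card h) (not_le.mpr hBlt)
      obtain ⟨w, hwT, hwB⟩ := Finset.not_subset.mp hsub
      have hwm := hwT
      simp only [hT, Finset.mem_inter, SimpleGraph.mem_neighborFinset] at hwm
      obtain ⟨hwu, hwv⟩ := hwm
      have hwB' : s(u,w) ∉ F ∧ s(w,v) ∉ F := by
        by_contra h
        exact hwB (by simp only [hB, Finset.mem_filter]; tauto)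
      have h1 : (S.deleteEdges ↑F).Adj u w := by
        rw [SimpleGraph.deleteEdges_adj]
        exact ⟨hwu, by simpa using hwB'.1⟩
      have h2 : (S.deleteEdges ↑F).Adj w v := by
        rw [SimpleGraph.deleteEdges_adj]
        exact ⟨hwv.symm, by simpa using hwB'.2⟩
      exact h1.reachable.trans h2.reachable
    · exact (by rw [SimpleGraph.deleteEdges_adj]; exact ⟨huv, by simpa using hin⟩ :
        (S.deleteEdges ↑F).Adj u v).reachable
  have : Nonempty V := hconn.nonempty
  refine ⟨fun u v => ?_⟩
  obtain ⟨p⟩ := hconn.preconnected u v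
  induction p with
  | nil => exact SimpleGraph.Reachable.refl _
  | cons h p ih => exact (key _ _ h).trans ih
end

section
/- Let c ≥ 2 and ρ ≥ 1 be integers, let G be a finite simple graph on a vertex type with keyword assignment A : V → K, and let φ be a finite set of keywords. Suppose some subgraph of G satisfies both the c-truss support condition and the minimum ρ keyword vertex constraint (applied to its vertex set). Then there exists a greatest such subgraph M of G: M satisfies both conditions, and every subgraph of G satisfying both conditions is a subgraph of M. -/
/-!
Both conditions survive taking the union `sSup P` of the family `P` of all subgraphs satisfying
them, which is then the greatest one. Every edge of the union is an edge of some member `S`,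
and its common neighbours in `S` remain common neighbours in the union, so the truss support
condition holds. The keyword constraint is upward closed and holds for the member given by the
hypothesis, which lies below the union.
-/

namespace SimpleGraph.Subgraph

variable {V : Type*} {G : SimpleGraph V}

def IsTruss (c : ℕ) (S : G.Subgraph) : Prop :=
  ∀ u v : V, S.Adj u v → c - 2 ≤ {w : V | S.Adj u w ∧ S.Adj v w}.ncard

variable [Finite V]

theorem ncard_commonAdj_mono {S T : G.Subgraph} (hST : S ≤ T) (u v : V) :
    {w : V | S.Adj u w ∧ S.Adj v w}.ncard ≤ {w : V | T.Adj u w ∧ T.Adj v w}.ncard :=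
  Set.ncard_le_ncard (fun _ ⟨hu, hv⟩ => ⟨hST.2 hu, hST.2 hv⟩) (Set.toFinite _)

theorem isTruss_sSup {c : ℕ} {P : Set G.Subgraph} (hP : ∀ S ∈ P, IsTruss c S) :
    IsTruss c (sSup P) := by
  intro u v huv
  obtain ⟨S, hSP, hS⟩ := sSup_adj.mp huv
  exact (hP S hSP u v hS).trans (ncard_commonAdj_mono (le_sSup hSP) u v)

end SimpleGraph.Subgraph

def MeetsKeywordQuota {V K : Type*} (A : V → K) (φ : Finset K) (ρ : ℕ) (s : Set V) : Prop :=
  ∀ k ∈ φ, ρ ≤ {v ∈ s | A v = k}.ncard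

theorem MeetsKeywordQuota.mono {V K : Type*} [Finite V] {A : V → K} {φ : Finset K} {ρ : ℕ}
    {s t : Set V} (hs : MeetsKeywordQuota A φ ρ s) (hst : s ⊆ t) :
    MeetsKeywordQuota A φ ρ t := fun k hk =>
  (hs k hk).trans <| Set.ncard_le_ncard (fun _ ⟨hv, hvk⟩ => ⟨hst hv, hvk⟩) (Set.toFinite _)

theorem maximal_rho_c_truss_exists_general {V K : Type*} [Fintype V]
    (c ρ : ℕ)
    (G : SimpleGraph V) (A : V → K) (φ : Finset K)
    (h : ∃ S : G.Subgraph,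
      (∀ u v : V, S.Adj u v → c - 2 ≤ {w : V | S.Adj u w ∧ S.Adj v w}.ncard) ∧
      (∀ k ∈ φ, ρ ≤ {v ∈ S.verts | A v = k}.ncard)) :
    ∃ M : G.Subgraph,
      ((∀ u v : V, M.Adj u v → c - 2 ≤ {w : V | M.Adj u w ∧ M.Adj v w}.ncard) ∧
        (∀ k ∈ φ, ρ ≤ {v ∈ M.verts | A v = k}.ncard)) ∧
      ∀ S : G.Subgraph,
        ((∀ u v : V, S.Adj u v → c - 2 ≤ {w : V | S.Adj u w ∧ S.Adj v w}.ncard) ∧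
          (∀ k ∈ φ, ρ ≤ {v ∈ S.verts | A v = k}.ncard)) → S ≤ M := by
  let P : Set G.Subgraph := {S | S.IsTruss c ∧ MeetsKeywordQuota A φ ρ S.verts}
  obtain ⟨S₀, hS₀⟩ := h
  have hS₀P : S₀ ∈ P := hS₀
  have hquota : MeetsKeywordQuota A φ ρ (sSup P).verts :=
    hS₀P.2.mono (SimpleGraph.Subgraph.verts_mono (le_sSup hS₀P))
  exact ⟨sSup P, ⟨SimpleGraph.Subgraph.isTruss_sSup fun _ hS => hS.1, hquota⟩,
    fun _ hS => le_sSup hS⟩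

/-- **Existence of the maximal `(ρ,c)`-truss.** If some subgraph of a finite
simple graph `G` satisfies both the `c`-truss support condition and the minimum
`ρ` keyword vertex constraint, then there is a greatest such subgraph `M`:
`M` satisfies both conditions and contains every subgraph satisfying them. -/
theorem maximal_rho_c_truss_exists {V K : Type*} [Fintype V]
    (c ρ : ℕ) (hc : 2 ≤ c) (hρ : 1 ≤ ρ)
    (G : SimpleGraph V) (A : V → K) (φ : Finset K)
    (h : ∃ S : G.Subgraph,
      (∀ u v : V, S.Adj u v → c - 2 ≤ {w : V | S.Adj u w ∧ S.Adj v w}.ncard) ∧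
      (∀ k ∈ φ, ρ ≤ {v ∈ S.verts | A v = k}.ncard)) :
    ∃ M : G.Subgraph,
      ((∀ u v : V, M.Adj u v → c - 2 ≤ {w : V | M.Adj u w ∧ M.Adj v w}.ncard) ∧
        (∀ k ∈ φ, ρ ≤ {v ∈ M.verts | A v = k}.ncard)) ∧
      ∀ S : G.Subgraph,
        ((∀ u v : V, S.Adj u v → c - 2 ≤ {w : V | S.Adj u w ∧ S.Adj v w}.ncard) ∧
          (∀ k ∈ φ, ρ ≤ {v ∈ S.verts | A v = k}.ncard)) → S ≤ M :=
  maximal_rho_c_truss_exists_general c ρ G A φ h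
end
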